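/- Let R > 0. For a pair 𝐟 = (f₁,f₂) of odd functions in C^∞([−R,R]) define (𝐀𝐟)(y) = (2/(h_−(y)h_+'(y) − h_−'(y)h_+(y))) · (h_+(y)f₁'(y) + h_+'(y)f₂(y), h_−(y)f₁'(y) + h_−'(y)f₂(y)), and for a pair 𝐠 = (g₁,g₂) of functions in C^∞([−R,R]) with g₁(−y) = −g₂(y) for all y define (𝐀^×𝐠)(y) = ((1/2)∫₀^y (−h_−'(y')g₁(y') + h_+'(y')g₂(y')) dy', (1/2)(h_−(y)g₁(y) − h_+(y)g₂(y))). Then: (i) 𝐀𝐟 is a pair of smooth functions satisfying [𝐀𝐟]₁(−y) = −[𝐀𝐟]₂(y) for all y; (ii) 𝐀^×𝐠 is a pair of odd smooth functions on [−R,R]; (iii) 𝐀(𝐀^×𝐠) = 𝐠 for all such 𝐠; and (iv) 𝐀^×(𝐀𝐟) = 𝐟 for all such 𝐟. -/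

import Mathlib

/-
Pointwise, `𝐀` inverts the matrix `½ [[−h₋', h₊'], [h₋, −h₊]]` that `𝐀^×` applies to `(g₁, g₂)`
to produce `(F₁', F₂)` for `F = 𝐀^×𝐠`; its determinant is `−W / 4`, where
`W = h₋ h₊' − h₋' h₊ = 2 (y h' − h) > 0`. Both compositions are therefore Cramer's rule, combined
with the fundamental theorem of calculus (and `f₁(0) = 0` for odd `f₁`) to pass between `F₁` and
`F₁'`. The parity statements come from `h₋(−y) = −h₊(y)`, which exchanges the two components
under `y ↦ −y` and makes the integrand defining `[𝐀^×𝐠]₁` even.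
-/

open Real MeasureTheory intervalIntegral

/-- The height function `h(y) = √(2 + y²) − 2`. -/
noncomputable def hfun (y : ℝ) : ℝ := Real.sqrt (2 + y ^ 2) - 2

/-- `h_−(y) = y − h(y)`. -/
noncomputable def hm (y : ℝ) : ℝ := y - hfun y

/-- `h_+(y) = y + h(y)`. -/
noncomputable def hp (y : ℝ) : ℝ := y + hfun y

/-- The operator `𝐀` turning a pair of odd functions into its half-wave pair. -/
noncomputable def Aop (f : (ℝ → ℝ) × (ℝ → ℝ)) : (ℝ → ℝ) × (ℝ → ℝ) :=
  (fun y => 2 / (hm y * deriv hp y - deriv hm y * hp y) *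
      (hp y * deriv f.1 y + deriv hp y * f.2 y),
   fun y => 2 / (hm y * deriv hp y - deriv hm y * hp y) *
      (hm y * deriv f.1 y + deriv hm y * f.2 y))

/-- The operator `𝐀^×` reversing the half-wave decomposition. -/
noncomputable def Axop (g : (ℝ → ℝ) × (ℝ → ℝ)) : (ℝ → ℝ) × (ℝ → ℝ) :=
  (fun y => (1 / 2) * ∫ t in (0:ℝ)..y, (-(deriv hm t) * g.1 t + deriv hp t * g.2 t),
   fun y => (1 / 2) * (hm y * g.1 y - hp y * g.2 y))

section Parity

variable {f g : ℝ → ℝ}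

theorem deriv_neg_eq_of_forall_neg_eq_neg (h : ∀ y, f (-y) = -g y) (y : ℝ) :
    deriv f (-y) = deriv g y := by
  have hf : f = -fun x => g (-x) := funext fun x => by simpa using h (-x)
  rw [hf, deriv.neg, deriv_comp_neg, neg_neg, neg_neg]

theorem intervalIntegral_zero_neg_of_even {E : Type*} [NormedAddCommGroup E] [NormedSpace ℝ E]
    {ψ : ℝ → E} (hψ : ∀ t, ψ (-t) = ψ t) (y : ℝ) :
    ∫ t in (0:ℝ)..-y, ψ t = -∫ t in (0:ℝ)..y, ψ t := by
  rw [integral_symm, ← neg_zero, ← integral_comp_neg]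
  simp only [hψ, neg_zero]

end Parity

theorem contDiff_intervalIntegral_of_contDiff {E : Type*} [NormedAddCommGroup E]
    [NormedSpace ℝ E] [CompleteSpace E] {ψ : ℝ → E} {n : ℕ∞} (hψ : ContDiff ℝ n ψ) (a : ℝ) :
    ContDiff ℝ (n + 1) fun y => ∫ t in a..y, ψ t := by
  refine contDiff_succ_iff_deriv.2 ⟨fun y => ?_, by simp, ?_⟩
  · exact (hψ.continuous.integral_hasStrictDerivAt a y).hasDerivAt.differentiableAt
  · rwa [funext (hψ.continuous.deriv_integral ψ a)]

section HeightFunction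

theorem hfun_neg (y : ℝ) : hfun (-y) = hfun y := by simp [hfun]

theorem hm_neg (y : ℝ) : hm (-y) = -hp y := by rw [hm, hp, hfun_neg]; ring

theorem hp_neg (y : ℝ) : hp (-y) = -hm y := by rw [hm, hp, hfun_neg]; ring

theorem deriv_hm_neg (y : ℝ) : deriv hm (-y) = deriv hp y :=
  deriv_neg_eq_of_forall_neg_eq_neg hm_neg y

theorem deriv_hp_neg (y : ℝ) : deriv hp (-y) = deriv hm y :=
  deriv_neg_eq_of_forall_neg_eq_neg hp_neg y

variable {n : WithTop ℕ∞}

theorem contDiff_hfun : ContDiff ℝ n hfun :=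
  ((contDiff_const.add (contDiff_id.pow 2)).sqrt fun y => by positivity).sub contDiff_const

theorem contDiff_hm : ContDiff ℝ n hm := contDiff_id.sub contDiff_hfun

theorem contDiff_hp : ContDiff ℝ n hp := contDiff_id.add contDiff_hfun

theorem contDiff_deriv_hm : ContDiff ℝ n (deriv hm) := contDiff_hm.deriv'

theorem contDiff_deriv_hp : ContDiff ℝ n (deriv hp) := contDiff_hp.deriv'

theorem deriv_hfun (y : ℝ) : deriv hfun y = y / √(2 + y ^ 2) := by
  have hs : 2 + y ^ 2 ≠ 0 := by positivity
  have h := (((hasDerivAt_pow 2 y).const_add 2).sqrt hs).sub_const 2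
  rw [show (fun x => √(2 + x ^ 2) - 2) = hfun from rfl] at h
  rw [h.deriv]
  field_simp
  simp

theorem mul_deriv_hfun_sub_hfun_pos (y : ℝ) : 0 < y * deriv hfun y - hfun y := by
  have hs : √(2 + y ^ 2) ^ 2 = 2 + y ^ 2 := Real.sq_sqrt (by positivity)
  have hs1 : 1 < √(2 + y ^ 2) := by
    rw [show (1:ℝ) = √1 by simp]; exact Real.sqrt_lt_sqrt zero_le_one (by nlinarith)
  have hform : y * deriv hfun y - hfun y = 2 - 2 / √(2 + y ^ 2) := by
    rw [deriv_hfun, hfun]; field_simp; linear_combination -hs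
  rw [hform, sub_pos, div_lt_iff₀ (by linarith)]
  linarith

theorem wronskian_eq (y : ℝ) :
    hm y * deriv hp y - deriv hm y * hp y = 2 * (y * deriv hfun y - hfun y) := by
  have hdiff : DifferentiableAt ℝ hfun y := (contDiff_hfun (n := 1)).differentiable one_ne_zero y
  have hp' : HasDerivAt hp (1 + deriv hfun y) y := (hasDerivAt_id y).add hdiff.hasDerivAt
  have hm' : HasDerivAt hm (1 - deriv hfun y) y := (hasDerivAt_id y).sub hdiff.hasDerivAt
  rw [hp'.deriv, hm'.deriv, hm, hp]
  ring

theorem wronskian_pos (y : ℝ) : 0 < hm y * deriv hp y - deriv hm y * hp y := by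
  rw [wronskian_eq]; linarith [mul_deriv_hfun_sub_hfun_pos y]

theorem contDiff_two_div_wronskian :
    ContDiff ℝ n fun y => 2 / (hm y * deriv hp y - deriv hm y * hp y) :=
  contDiff_const.div ((contDiff_hm.mul contDiff_deriv_hp).sub (contDiff_deriv_hm.mul contDiff_hp))
    fun y => (wronskian_pos y).ne'

end HeightFunction

section HalfwaveOperators

variable {f₁ f₂ g₁ g₂ : ℝ → ℝ}

theorem contDiff_Aop_fst {n : WithTop ℕ∞} (hf₁ : ContDiff ℝ n (deriv f₁))
    (hf₂ : ContDiff ℝ n f₂) : ContDiff ℝ n (Aop (f₁, f₂)).1 :=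
  contDiff_two_div_wronskian.mul ((contDiff_hp.mul hf₁).add (contDiff_deriv_hp.mul hf₂))

theorem contDiff_Aop_snd {n : WithTop ℕ∞} (hf₁ : ContDiff ℝ n (deriv f₁))
    (hf₂ : ContDiff ℝ n f₂) : ContDiff ℝ n (Aop (f₁, f₂)).2 :=
  contDiff_two_div_wronskian.mul ((contDiff_hm.mul hf₁).add (contDiff_deriv_hm.mul hf₂))

theorem Aop_fst_neg (hf₁ : ∀ y, f₁ (-y) = -f₁ y) (hf₂ : ∀ y, f₂ (-y) = -f₂ y) (y : ℝ) :
    (Aop (f₁, f₂)).1 (-y) = -(Aop (f₁, f₂)).2 y := by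
  simp only [Aop]
  rw [hm_neg, hp_neg, deriv_hm_neg, deriv_hp_neg, deriv_neg_eq_of_forall_neg_eq_neg hf₁, hf₂]
  ring

theorem Axop_Aop_fst (hf₁ : ContDiff ℝ 1 f₁) (hf₁0 : f₁ 0 = 0) (y : ℝ) :
    (Axop (Aop (f₁, f₂))).1 y = f₁ y := by
  have hintegrand : ∀ t, -deriv hm t * (Aop (f₁, f₂)).1 t + deriv hp t * (Aop (f₁, f₂)).2 t
      = 2 * deriv f₁ t := fun t => by
    have := (wronskian_pos t).ne'
    simp only [Aop]
    field_simp
    ring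
  simp only [Axop, hintegrand]
  rw [intervalIntegral.integral_const_mul, integral_deriv_of_contDiffOn_uIcc hf₁.contDiffOn, hf₁0]
  ring

theorem Axop_Aop_snd (y : ℝ) : (Axop (Aop (f₁, f₂))).2 y = f₂ y := by
  have := (wronskian_pos y).ne'
  simp only [Axop, Aop]
  field_simp
  ring

theorem hasDerivAt_Axop_fst (hg₁ : Continuous g₁) (hg₂ : Continuous g₂) (y : ℝ) :
    HasDerivAt (Axop (g₁, g₂)).1 (1 / 2 * (-deriv hm y * g₁ y + deriv hp y * g₂ y)) y :=
  (((contDiff_deriv_hm (n := 0)).continuous.neg.mul hg₁).add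
    ((contDiff_deriv_hp (n := 0)).continuous.mul hg₂)
    |>.integral_hasStrictDerivAt 0 y).hasDerivAt.const_mul _

theorem contDiff_Axop_fst {n : ℕ∞} (hg₁ : ContDiff ℝ n g₁) (hg₂ : ContDiff ℝ n g₂) :
    ContDiff ℝ (n + 1) (Axop (g₁, g₂)).1 :=
  contDiff_const.mul (contDiff_intervalIntegral_of_contDiff
    ((contDiff_deriv_hm.neg.mul hg₁).add (contDiff_deriv_hp.mul hg₂)) 0)

theorem contDiff_Axop_snd {n : WithTop ℕ∞} (hg₁ : ContDiff ℝ n g₁) (hg₂ : ContDiff ℝ n g₂) :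
    ContDiff ℝ n (Axop (g₁, g₂)).2 :=
  contDiff_const.mul ((contDiff_hm.mul hg₁).sub (contDiff_hp.mul hg₂))

theorem Axop_fst_neg (hg : ∀ y, g₁ (-y) = -g₂ y) (y : ℝ) :
    (Axop (g₁, g₂)).1 (-y) = -(Axop (g₁, g₂)).1 y := by
  have hg' (t : ℝ) : g₂ (-t) = -g₁ t := neg_eq_iff_eq_neg.mp (by simpa using (hg (-t)).symm)
  let ψ t := -deriv hm t * g₁ t + deriv hp t * g₂ t
  have hψ (t : ℝ) : ψ (-t) = ψ t := by
    simp only [ψ, deriv_hm_neg, deriv_hp_neg, hg, hg']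
    ring
  simp only [Axop]
  rw [intervalIntegral_zero_neg_of_even (ψ := ψ) hψ]
  ring

theorem Axop_snd_neg (hg : ∀ y, g₁ (-y) = -g₂ y) (y : ℝ) :
    (Axop (g₁, g₂)).2 (-y) = -(Axop (g₁, g₂)).2 y := by
  have hg' : g₂ (-y) = -g₁ y := neg_eq_iff_eq_neg.mp (by simpa using (hg (-y)).symm)
  simp only [Axop]
  rw [hm_neg, hp_neg, hg, hg']
  ring

theorem Aop_Axop_fst (hg₁ : Continuous g₁) (hg₂ : Continuous g₂) (y : ℝ) :
    (Aop (Axop (g₁, g₂))).1 y = g₁ y := by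
  have := (wronskian_pos y).ne'
  simp only [Aop, (hasDerivAt_Axop_fst hg₁ hg₂ y).deriv]
  simp only [Axop]
  field_simp
  ring

theorem Aop_Axop_snd (hg₁ : Continuous g₁) (hg₂ : Continuous g₂) (y : ℝ) :
    (Aop (Axop (g₁, g₂))).2 y = g₂ y := by
  have := (wronskian_pos y).ne'
  simp only [Aop, (hasDerivAt_Axop_fst hg₁ hg₂ y).deriv]
  simp only [Axop]
  field_simp
  ring

end HalfwaveOperators

theorem halfwave_operators_general (R : ℝ) :
    (∀ f₁ f₂ : ℝ → ℝ, ContDiff ℝ (⊤ : ℕ∞) f₁ → ContDiff ℝ (⊤ : ℕ∞) f₂ →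
      (∀ y, f₁ (-y) = -f₁ y) → (∀ y, f₂ (-y) = -f₂ y) →
      -- (i) `𝐀𝐟` is a pair of smooth functions with `[𝐀𝐟]₁(−y) = −[𝐀𝐟]₂(y)`
      (ContDiff ℝ (⊤ : ℕ∞) (Aop (f₁, f₂)).1 ∧ ContDiff ℝ (⊤ : ℕ∞) (Aop (f₁, f₂)).2 ∧
        ∀ y ∈ Set.Icc (-R) R, (Aop (f₁, f₂)).1 (-y) = -(Aop (f₁, f₂)).2 y) ∧
      -- (iv) `𝐀^×(𝐀𝐟) = 𝐟`
      (∀ y ∈ Set.Icc (-R) R,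
        (Axop (Aop (f₁, f₂))).1 y = f₁ y ∧ (Axop (Aop (f₁, f₂))).2 y = f₂ y)) ∧
    (∀ g₁ g₂ : ℝ → ℝ, ContDiff ℝ (⊤ : ℕ∞) g₁ → ContDiff ℝ (⊤ : ℕ∞) g₂ →
      (∀ y, g₁ (-y) = -g₂ y) →
      -- (ii) `𝐀^×𝐠` is a pair of odd smooth functions
      (ContDiff ℝ (⊤ : ℕ∞) (Axop (g₁, g₂)).1 ∧ ContDiff ℝ (⊤ : ℕ∞) (Axop (g₁, g₂)).2 ∧
        (∀ y ∈ Set.Icc (-R) R, (Axop (g₁, g₂)).1 (-y) = -(Axop (g₁, g₂)).1 y) ∧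
        (∀ y ∈ Set.Icc (-R) R, (Axop (g₁, g₂)).2 (-y) = -(Axop (g₁, g₂)).2 y)) ∧
      -- (iii) `𝐀(𝐀^×𝐠) = 𝐠`
      (∀ y ∈ Set.Icc (-R) R,
        (Aop (Axop (g₁, g₂))).1 y = g₁ y ∧ (Aop (Axop (g₁, g₂))).2 y = g₂ y)) := by
  refine ⟨fun f₁ f₂ hf₁ hf₂ hodd₁ hodd₂ => ?_, fun g₁ g₂ hg₁ hg₂ hg => ?_⟩
  · have hdf₁ : ContDiff ℝ (⊤ : ℕ∞) (deriv f₁) := hf₁.deriv'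
    have hf₁0 : f₁ 0 = 0 := by
      linarith [show f₁ 0 = -f₁ 0 by simpa using hodd₁ 0]
    exact ⟨⟨contDiff_Aop_fst hdf₁ hf₂, contDiff_Aop_snd hdf₁ hf₂,
        fun y _ => Aop_fst_neg hodd₁ hodd₂ y⟩,
      fun y _ => ⟨Axop_Aop_fst (hf₁.of_le (by exact_mod_cast le_top)) hf₁0 y, Axop_Aop_snd y⟩⟩
  · exact ⟨⟨contDiff_Axop_fst hg₁ hg₂, contDiff_Axop_snd hg₁ hg₂,
        fun y _ => Axop_fst_neg hg y, fun y _ => Axop_snd_neg hg y⟩,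
      fun y _ => ⟨Aop_Axop_fst hg₁.continuous hg₂.continuous y,
        Aop_Axop_snd hg₁.continuous hg₂.continuous y⟩⟩

theorem halfwave_operators (R : ℝ) (hR : 0 < R) :
    (∀ f₁ f₂ : ℝ → ℝ, ContDiff ℝ (⊤ : ℕ∞) f₁ → ContDiff ℝ (⊤ : ℕ∞) f₂ →
      (∀ y, f₁ (-y) = -f₁ y) → (∀ y, f₂ (-y) = -f₂ y) →
      -- (i) `𝐀𝐟` is a pair of smooth functions with `[𝐀𝐟]₁(−y) = −[𝐀𝐟]₂(y)`
      (ContDiff ℝ (⊤ : ℕ∞) (Aop (f₁, f₂)).1 ∧ ContDiff ℝ (⊤ : ℕ∞) (Aop (f₁, f₂)).2 ∧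
        ∀ y ∈ Set.Icc (-R) R, (Aop (f₁, f₂)).1 (-y) = -(Aop (f₁, f₂)).2 y) ∧
      -- (iv) `𝐀^×(𝐀𝐟) = 𝐟`
      (∀ y ∈ Set.Icc (-R) R,
        (Axop (Aop (f₁, f₂))).1 y = f₁ y ∧ (Axop (Aop (f₁, f₂))).2 y = f₂ y)) ∧
    (∀ g₁ g₂ : ℝ → ℝ, ContDiff ℝ (⊤ : ℕ∞) g₁ → ContDiff ℝ (⊤ : ℕ∞) g₂ →
      (∀ y, g₁ (-y) = -g₂ y) →
      -- (ii) `𝐀^×𝐠` is a pair of odd smooth functions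
      (ContDiff ℝ (⊤ : ℕ∞) (Axop (g₁, g₂)).1 ∧ ContDiff ℝ (⊤ : ℕ∞) (Axop (g₁, g₂)).2 ∧
        (∀ y ∈ Set.Icc (-R) R, (Axop (g₁, g₂)).1 (-y) = -(Axop (g₁, g₂)).1 y) ∧
        (∀ y ∈ Set.Icc (-R) R, (Axop (g₁, g₂)).2 (-y) = -(Axop (g₁, g₂)).2 y)) ∧
      -- (iii) `𝐀(𝐀^×𝐠) = 𝐠`
      (∀ y ∈ Set.Icc (-R) R,
        (Aop (Axop (g₁, g₂))).1 y = g₁ y ∧ (Aop (Axop (g₁, g₂))).2 y = g₂ y)) :=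
  halfwave_operators_general R
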